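/- Let f : M →+ N be an equifibered homomorphism of commutative additive monoids, X a type, and u : X → N any function. Then the map Multiset {p : X × M // u p.1 = f p.2} → {(s, m) : Multiset X × M // (s.map u).sum = f m}, sending a multiset t to the pair (multiset of first components of t, sum of the second components of t), is a bijection. -/
import Mathlib


/-- A homomorphism `f : M →+ N` of commutative additive monoids is *equifibered* if for all
`n₁ n₂ : N` and `m : M` with `f m = n₁ + n₂` there is exactly one pair `(m₁, m₂)` with
`f m₁ = n₁`, `f m₂ = n₂` and `m₁ + m₂ = m`. -/
def Equifibered {M N : Type*} [AddCommMonoid M] [AddCommMonoid N] (f : M →+ N) : Prop :=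
  ∀ (n₁ n₂ : N) (m : M), f m = n₁ + n₂ →
    ∃! p : M × M, f p.1 = n₁ ∧ f p.2 = n₂ ∧ p.1 + p.2 = m

private lemma equifibered_key
    {M N : Type*} [AddCommMonoid M] [AddCommMonoid N] (f : M →+ N)
    (hf : Equifibered f) {X : Type*} (u : X → N) :
    ∀ (s : Multiset X) (m : M), (s.map u).sum = f m →
      ∃! t : Multiset {p : X × M // u p.1 = f p.2},
        t.map (fun p => p.1.1) = s ∧ (t.map (fun p => p.1.2)).sum = m := by
  classical
  intro s
  induction s using Multiset.induction_on with
  | empty =>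
    intro m hm
    simp only [Multiset.map_zero, Multiset.sum_zero] at hm
    have h0 : m = 0 := by
      obtain ⟨p, hp, hu⟩ := hf 0 0 m (by rw [← hm, add_zero])
      have e1 : ((m, 0) : M × M) = p := hu (m, 0) ⟨hm.symm, map_zero f, add_zero m⟩
      have e2 : ((0, m) : M × M) = p := hu (0, m) ⟨map_zero f, hm.symm, zero_add m⟩
      have := e1.trans e2.symm
      exact (Prod.ext_iff.mp this).1
    refine ⟨0, ⟨by simp, by simp [h0]⟩, ?_⟩
    rintro t ⟨ht1, -⟩
    simpa using Multiset.map_eq_zero.mp ht1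
  | cons a s ih =>
    intro m hm
    simp only [Multiset.map_cons, Multiset.sum_cons] at hm
    obtain ⟨⟨m₁, m₂⟩, ⟨h1, h2, h3⟩, hu⟩ := hf (u a) ((s.map u).sum) m hm.symm
    obtain ⟨t', ⟨ht1, ht2⟩, ht'u⟩ := ih m₂ h2.symm
    refine ⟨(⟨(a, m₁), h1.symm⟩ : {p : X × M // u p.1 = f p.2}) ::ₘ t', ⟨by simp [ht1], by
      simp [ht2, h3]⟩, ?_⟩
    rintro t ⟨hm1, hm2⟩
    obtain ⟨p, hp, hpa, hpe⟩ := (Multiset.map_eq_cons _ _ _ _).mpr hm1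
    have hte : p ::ₘ t.erase p = t := Multiset.cons_erase hp
    have hsum : p.1.2 + (((t.erase p).map (fun p => p.1.2)).sum) = m := by
      rw [← hm2, ← hte]; simp
    have hfsum : f (((t.erase p).map (fun p => p.1.2)).sum) = (s.map u).sum := by
      rw [map_multiset_sum, Multiset.map_map, ← hpe, Multiset.map_map]
      exact congrArg Multiset.sum
        (Multiset.map_congr rfl (fun q _ => (q.2).symm))
    have hpair : ((p.1.2, ((t.erase p).map (fun p => p.1.2)).sum) : M × M) = (m₁, m₂) :=
      hu _ ⟨by rw [← p.2, hpa], hfsum, hsum⟩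
    have hp1 : p.1.2 = m₁ := (Prod.ext_iff.mp hpair).1
    have hp2 : (((t.erase p).map (fun p => p.1.2)).sum) = m₂ := (Prod.ext_iff.mp hpair).2
    have hteq : t.erase p = t' := ht'u _ ⟨hpe, hp2⟩
    have hpeq : p = (⟨(a, m₁), h1.symm⟩ : {p : X × M // u p.1 = f p.2}) := by
      apply Subtype.ext
      exact Prod.ext hpa hp1
    rw [← hte, hteq, hpeq]

/-- Equifibered maps are representably free: for an equifibered `f : M →+ N`, a type `X` and
any map `u : X → N`, the map `Multiset (X ×_N M) → (Multiset X) ×_N M`, sending a multiset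
`t` of pairs to (the multiset of first components, the sum of the second components), is a
bijection. -/
theorem equifibered_representably_free
    {M N : Type*} [AddCommMonoid M] [AddCommMonoid N] (f : M →+ N)
    (hf : Equifibered f) {X : Type*} (u : X → N) :
    Function.Bijective (fun t : Multiset {p : X × M // u p.1 = f p.2} =>
      (⟨(t.map (fun p => p.1.1), (t.map (fun p => p.1.2)).sum), by
          rw [Multiset.map_map, map_multiset_sum, Multiset.map_map]
          exact congrArg Multiset.sum
            (Multiset.map_congr rfl (fun p _ => p.2))⟩ :
        {q : Multiset X × M // (q.1.map u).sum = f q.2})) := by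
  rw [Function.bijective_iff_existsUnique]
  rintro ⟨⟨s, m⟩, hq⟩
  obtain ⟨t, ⟨ht1, ht2⟩, htu⟩ := equifibered_key f hf u s m hq
  refine ⟨t, ?_, ?_⟩
  · exact Subtype.ext (Prod.ext ht1 ht2)
  · intro t' ht'
    apply htu
    have := Subtype.ext_iff.mp ht'
    exact ⟨(Prod.ext_iff.mp this).1, (Prod.ext_iff.mp this).2⟩
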